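/- arXiv:1708.04572 — 3 statements merged into one kernel-verified Lean document; each statement's English description precedes it below -/
import Mathlib

section
/- For 1 < β ≤ 2 and φ(x) = x^β - 1 - β(x-1), the inequality x^{β-1} y + (1-β) x - y + β - 1 ≤ φ(x)^{(β-1)/β} φ(y)^{1/β} holds for all x, y ≥ 0. -/
/-!
Write `ψ = φ ^ (1/β)`. Splitting off `φ x` on both sides, the inequality becomes the tangent-line
inequality `ψ'(x) (y - x) ≤ ψ y - ψ x`, multiplied by `φ(x) ^ ((β-1)/β)`. The sign of `ψ''` is that
of `x^(β-2) φ(x) - (x^(β-1) - 1)^2 = (β-1) x^(β-2) + (2-β) x^(β-1) - 1`, which is nonnegative by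
weighted AM-GM; so `ψ` is convex on `[0,1]` and on `[1,∞)`. When `x` and `y` lie on opposite sides
of `1`, compare both sides through the minimum `ψ 1 = 0`.
-/

open Real Set

theorem ConvexOn.mul_sub_le_sub_of_hasDerivAt {S : Set ℝ} {f : ℝ → ℝ} {f' x y : ℝ}
    (hf : ConvexOn ℝ S f) (hx : x ∈ S) (hy : y ∈ S) (hf' : HasDerivAt f f' x) :
    f' * (y - x) ≤ f y - f x := by
  rcases lt_trichotomy x y with hxy | rfl | hxy
  · have h := hf.le_slope_of_hasDerivAt hx hy hxy hf'
    rwa [slope_def_field, le_div_iff₀ (sub_pos.2 hxy)] at h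
  · simp
  · have h := hf.slope_le_of_hasDerivAt hy hx hxy hf'
    rw [slope_def_field, div_le_iff₀ (sub_pos.2 hxy)] at h
    linarith

/-- The Bregman divergence of `t ↦ t ^ β` between `x` and `1`. -/
noncomputable def bregmanRpow (β x : ℝ) : ℝ := x ^ β - 1 - β * (x - 1)

noncomputable def bregmanRoot (β x : ℝ) : ℝ := bregmanRpow β x ^ (1 / β)

noncomputable def bregmanRootDeriv (β x : ℝ) : ℝ :=
  (x ^ (β - 1) - 1) * bregmanRpow β x ^ (1 / β - 1)

section

variable {β x y : ℝ}

@[simp]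
theorem bregmanRpow_one : bregmanRpow β 1 = 0 := by simp [bregmanRpow]

theorem bregmanRpow_nonneg (hβ : 1 ≤ β) (hx : 0 ≤ x) : 0 ≤ bregmanRpow β x := by
  have h := one_add_mul_self_le_rpow_one_add (s := x - 1) (by linarith) hβ
  rw [add_sub_cancel] at h
  unfold bregmanRpow
  linarith

theorem bregmanRpow_pos (hβ : 1 < β) (hx : 0 ≤ x) (hx1 : x ≠ 1) : 0 < bregmanRpow β x := by
  have h := one_add_mul_self_lt_rpow_one_add (s := x - 1) (by linarith) (sub_ne_zero.2 hx1) hβ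
  rw [add_sub_cancel] at h
  unfold bregmanRpow
  linarith

theorem hasDerivAt_bregmanRpow (hβ : 1 ≤ β) (x : ℝ) :
    HasDerivAt (bregmanRpow β) (β * (x ^ (β - 1) - 1)) x := by
  have h := ((hasDerivAt_rpow_const (x := x) (Or.inr hβ)).sub_const 1).sub
    (((hasDerivAt_id x).sub_const 1).const_mul β)
  exact h.congr_deriv (by ring)

theorem bregmanRoot_nonneg (hβ : 1 ≤ β) (hx : 0 ≤ x) : 0 ≤ bregmanRoot β x :=
  rpow_nonneg (bregmanRpow_nonneg hβ hx) _

@[simp]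
theorem bregmanRoot_one (hβ : 0 < β) : bregmanRoot β 1 = 0 := by
  simp [bregmanRoot, hβ.ne']

theorem continuous_bregmanRoot (hβ : 1 ≤ β) : Continuous (bregmanRoot β) :=
  (continuous_iff_continuousAt.2 fun x => (hasDerivAt_bregmanRpow hβ x).continuousAt).rpow_const
    fun _ => Or.inr (by positivity)

theorem hasDerivAt_bregmanRoot (hβ : 1 ≤ β) (hx : bregmanRpow β x ≠ 0) :
    HasDerivAt (bregmanRoot β) (bregmanRootDeriv β x) x := by
  have hβ0 : β ≠ 0 := by positivity
  refine ((hasDerivAt_rpow_const (p := 1 / β) (Or.inl hx)).comp x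
    (hasDerivAt_bregmanRpow hβ x)).congr_deriv ?_
  unfold bregmanRootDeriv
  field_simp

theorem hasDerivAt_bregmanRootDeriv (hβ : 1 ≤ β) (hx : 0 < x) (hfx : 0 < bregmanRpow β x) :
    HasDerivAt (bregmanRootDeriv β)
      ((β - 1) * bregmanRpow β x ^ (1 / β - 2) *
        (x ^ (β - 2) * bregmanRpow β x - (x ^ (β - 1) - 1) ^ 2)) x := by
  have hβ0 : β ≠ 0 := by positivity
  have hpow : HasDerivAt (fun t => t ^ (β - 1) - 1) ((β - 1) * x ^ (β - 2)) x :=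
    ((hasDerivAt_rpow_const (p := β - 1) (Or.inl hx.ne')).sub_const 1).congr_deriv
      (by ring_nf)
  have hroot : HasDerivAt (fun t => bregmanRpow β t ^ (1 / β - 1))
      ((1 / β - 1) * bregmanRpow β x ^ (1 / β - 2) * (β * (x ^ (β - 1) - 1))) x :=
    ((hasDerivAt_rpow_const (p := 1 / β - 1) (Or.inl hfx.ne')).comp x
      (hasDerivAt_bregmanRpow hβ x)).congr_deriv (by ring_nf)
  have hsplit :
      bregmanRpow β x ^ (1 / β - 1) = bregmanRpow β x ^ (1 / β - 2) * bregmanRpow β x := by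
    rw [← rpow_add_one hfx.ne']
    ring_nf
  refine (hpow.mul hroot).congr_deriv ?_
  rw [hsplit]
  field_simp
  ring

theorem sq_rpow_sub_one_le_rpow_mul_bregmanRpow (hβ1 : 1 ≤ β) (hβ2 : β ≤ 2) (hx : 0 < x) :
    (x ^ (β - 1) - 1) ^ 2 ≤ x ^ (β - 2) * bregmanRpow β x := by
  have amgm := geom_mean_le_arith_mean2_weighted (sub_nonneg.2 hβ1) (sub_nonneg.2 hβ2)
    (rpow_nonneg hx.le (β - 2)) (rpow_nonneg hx.le (β - 1)) (by ring)
  have hgeom : (x ^ (β - 2)) ^ (β - 1) * (x ^ (β - 1)) ^ (2 - β) = 1 := by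
    rw [← rpow_mul hx.le, ← rpow_mul hx.le, ← rpow_add hx]
    ring_nf
    exact rpow_zero x
  have hsq : x ^ (β - 2) * x ^ β = x ^ (β - 1) * x ^ (β - 1) := by
    rw [← rpow_add hx, ← rpow_add hx]
    ring_nf
  have hlin : x ^ (β - 2) * x = x ^ (β - 1) := by
    rw [← rpow_add_one hx.ne']
    ring_nf
  rw [hgeom] at amgm
  unfold bregmanRpow
  linear_combination amgm - hsq + β * hlin

theorem convexOn_bregmanRoot (hβ1 : 1 < β) (hβ2 : β ≤ 2) {D : Set ℝ} (hD : Convex ℝ D)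
    (hD0 : D ⊆ Ici 0) (hD1 : 1 ∉ interior D) : ConvexOn ℝ D (bregmanRoot β) := by
  have hint : ∀ t ∈ interior D, 0 < t ∧ 0 < bregmanRpow β t := by
    intro t ht
    have ht0 : 0 < t := by simpa using interior_mono hD0 ht
    exact ⟨ht0, bregmanRpow_pos hβ1 ht0.le (ne_of_mem_of_not_mem ht hD1)⟩
  refine convexOn_of_hasDerivWithinAt2_nonneg hD (continuous_bregmanRoot hβ1.le).continuousOn
    (fun t ht => (hasDerivAt_bregmanRoot hβ1.le (hint t ht).2.ne').hasDerivWithinAt)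
    (fun t ht => (hasDerivAt_bregmanRootDeriv hβ1.le (hint t ht).1 (hint t ht).2).hasDerivWithinAt)
    fun t ht => ?_
  obtain ⟨ht0, hft⟩ := hint t ht
  have hsq := sq_rpow_sub_one_le_rpow_mul_bregmanRpow hβ1.le hβ2 ht0
  exact mul_nonneg (mul_nonneg (sub_nonneg.2 hβ1.le) (rpow_nonneg hft.le _)) (sub_nonneg.2 hsq)

theorem bregmanRootDeriv_mul_sub_le_of_mem (hβ1 : 1 < β) (hβ2 : β ≤ 2) {D : Set ℝ}
    (hD : Convex ℝ D) (hD0 : D ⊆ Ici 0) (hD1 : 1 ∉ interior D) (hx : x ∈ D) (hy : y ∈ D) :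
    bregmanRootDeriv β x * (y - x) ≤ bregmanRoot β y - bregmanRoot β x := by
  rcases eq_or_ne x 1 with rfl | hx1
  · simp [bregmanRootDeriv, bregmanRoot_one (zero_lt_one.trans hβ1),
      bregmanRoot_nonneg hβ1.le (hD0 hy)]
  · exact (convexOn_bregmanRoot hβ1 hβ2 hD hD0 hD1).mul_sub_le_sub_of_hasDerivAt hx hy
      (hasDerivAt_bregmanRoot hβ1.le (bregmanRpow_pos hβ1 (hD0 hx) hx1).ne')

theorem bregmanRootDeriv_mul_sub_le (hβ1 : 1 < β) (hβ2 : β ≤ 2) (hx : 0 ≤ x) (hy : 0 ≤ y) :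
    bregmanRootDeriv β x * (y - x) ≤ bregmanRoot β y - bregmanRoot β x := by
  have left {u v : ℝ} : u ∈ Icc 0 1 → v ∈ Icc 0 1 →
      bregmanRootDeriv β u * (v - u) ≤ bregmanRoot β v - bregmanRoot β u :=
    bregmanRootDeriv_mul_sub_le_of_mem hβ1 hβ2 (convex_Icc 0 1) Icc_subset_Ici_self (by simp)
  have right {u v : ℝ} : u ∈ Ici 1 → v ∈ Ici 1 →
      bregmanRootDeriv β u * (v - u) ≤ bregmanRoot β v - bregmanRoot β u :=
    bregmanRootDeriv_mul_sub_le_of_mem hβ1 hβ2 (convex_Ici 1) (Ici_subset_Ici.2 zero_le_one)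
      (by simp)
  have hψ1 : bregmanRoot β 1 = 0 := bregmanRoot_one (zero_lt_one.trans hβ1)
  have hψx := bregmanRoot_nonneg hβ1.le hx
  have hψy := bregmanRoot_nonneg hβ1.le hy
  rcases lt_or_ge x 1 with hx1 | hx1 <;> rcases lt_or_ge y 1 with hy1 | hy1
  · exact left ⟨hx, hx1.le⟩ ⟨hy, hy1.le⟩
  · have h := left ⟨hx, hx1.le⟩ ⟨zero_le_one, le_rfl⟩
    have hg : bregmanRootDeriv β x ≤ 0 := by nlinarith
    nlinarith [mul_nonpos_of_nonpos_of_nonneg hg (sub_nonneg.2 hy1)]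
  · rcases hx1.eq_or_lt with rfl | hx1
    · exact left ⟨zero_le_one, le_rfl⟩ ⟨hy, hy1.le⟩
    have h := right hx1.le self_mem_Ici
    have hg : 0 ≤ bregmanRootDeriv β x := by nlinarith
    nlinarith [mul_nonneg hg (sub_nonneg.2 hy1.le)]
  · exact right hx1 hy1

theorem bregmanRpow_rpow_mul_bregmanRoot (hβ : 1 ≤ β) (hx : 0 ≤ x) :
    bregmanRpow β x ^ ((β - 1) / β) * bregmanRoot β x = bregmanRpow β x := by
  have hβ0 : β ≠ 0 := by positivity
  have hexp : (β - 1) / β + 1 / β = 1 := by field_simp; ring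
  rw [bregmanRoot, ← rpow_add' (bregmanRpow_nonneg hβ hx) (by rw [hexp]; exact one_ne_zero), hexp,
    rpow_one]

theorem bregmanRpow_rpow_mul_bregmanRootDeriv (hβ : 1 < β) (hx : 0 ≤ x) :
    bregmanRpow β x ^ ((β - 1) / β) * bregmanRootDeriv β x = x ^ (β - 1) - 1 := by
  rcases eq_or_ne x 1 with rfl | hx1
  · simp [bregmanRootDeriv]
  have hβ0 : β ≠ 0 := by positivity
  have hexp : (β - 1) / β + (1 / β - 1) = 0 := by field_simp; ring
  rw [bregmanRootDeriv, mul_left_comm, ← rpow_add (bregmanRpow_pos hβ hx hx1), hexp, rpow_zero,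
    mul_one]

end

theorem pointwise_entropy_inequality (β : ℝ) (hβ1 : 1 < β) (hβ2 : β ≤ 2)
    (φ : ℝ → ℝ) (hφ : ∀ x : ℝ, φ x = x ^ β - 1 - β * (x - 1)) :
    ∀ x y : ℝ, 0 ≤ x → 0 ≤ y →
      x ^ (β - 1) * y + (1 - β) * x - y + β - 1 ≤
        φ x ^ ((β - 1) / β) * φ y ^ (1 / β) := by
  intro x y hx hy
  obtain rfl : φ = bregmanRpow β := funext hφ
  have hxβ : x ^ (β - 1) * x = x ^ β := by
    rw [← rpow_add_one' hx (by linarith), sub_add_cancel]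
  set c := bregmanRpow β x ^ ((β - 1) / β)
  calc x ^ (β - 1) * y + (1 - β) * x - y + β - 1
      = bregmanRpow β x + (x ^ (β - 1) - 1) * (y - x) := by rw [bregmanRpow, ← hxβ]; ring
    _ = bregmanRpow β x + c * (bregmanRootDeriv β x * (y - x)) := by
      rw [← mul_assoc, bregmanRpow_rpow_mul_bregmanRootDeriv hβ1 hx]
    _ ≤ bregmanRpow β x + c * (bregmanRoot β y - bregmanRoot β x) := by
      gcongr
      · exact rpow_nonneg (bregmanRpow_nonneg hβ1.le hx) _
      · exact bregmanRootDeriv_mul_sub_le hβ1 hβ2 hx hy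
    _ = c * bregmanRpow β y ^ (1 / β) := by
      rw [mul_sub, bregmanRpow_rpow_mul_bregmanRoot hβ1.le hx, bregmanRoot]
      ring
end

section
/- Hölder step for the entropy estimate: let (Ω, μ) be a probability measure space, β ∈ (1,2], and let h₁, h₂ : Ω → [0,∞) be measurable with ∫ h₁ dμ = ∫ h₂ dμ = 1. Then ∫ h₁^{β-1} h₂ dμ - 1 ≤ (∫ φ_β(h₁) dμ)^{(β-1)/β} (∫ φ_β(h₂) dμ)^{1/β}, where φ_β(x) = x^β - 1 - β(x-1). -/
/-!
Put `ψ = φ_β ^ (1 / β)`. For `φ_β x > 0`, the left side of the pointwise inequality is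
`φ_β(x) ^ ((β - 1) / β)` times the tangent line of `ψ` at `x`, evaluated at `y`. On `[0, 1)` and on
`(1, ∞)` the function `ψ` is convex: `ψ''` has the sign of `x ^ (β - 2) φ_β(x) - (x ^ (β - 1) - 1) ^ 2`,
which is nonnegative for `β ≤ 2` by weighted AM-GM. This proves the pointwise inequality when `x` and
`y` lie on the same side of `1`; otherwise its left side is nonpositive by Bernoulli's inequality.
Integrate it, using `∫ h₁ = ∫ h₂ = 1` on the left and Hölder's inequality on the right.
-/

open Real MeasureTheory Set

section Holder

variable {α : Type*} [MeasurableSpace α] {μ : Measure α} {f g : α → ℝ} {p q : ℝ}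

lemma integrable_rpow_mul_rpow (hf : 0 ≤ᵐ[μ] f) (hg : 0 ≤ᵐ[μ] g) (hfi : Integrable f μ)
    (hgi : Integrable g μ) (hp : 0 ≤ p) (hq : 0 ≤ q) (hpq : p + q = 1) :
    Integrable (fun a => f a ^ p * g a ^ q) μ := by
  refine Integrable.mono' ((hfi.const_mul p).add (hgi.const_mul q))
    ((hfi.aemeasurable.pow_const p).mul (hgi.aemeasurable.pow_const q)).aestronglyMeasurable ?_
  filter_upwards [hf, hg] with a hfa hgb
  rw [Real.norm_of_nonneg (mul_nonneg (rpow_nonneg hfa p) (rpow_nonneg hgb q))]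
  exact Real.geom_mean_le_arith_mean2_weighted hp hq hfa hgb hpq

lemma integral_rpow_mul_rpow_le (hf : 0 ≤ᵐ[μ] f) (hg : 0 ≤ᵐ[μ] g) (hfi : Integrable f μ)
    (hgi : Integrable g μ) (hp : 0 ≤ p) (hq : 0 ≤ q) (hpq : p + q = 1) :
    ∫ a, f a ^ p * g a ^ q ∂μ ≤ (∫ a, f a ∂μ) ^ p * (∫ a, g a ∂μ) ^ q := by
  have hfg : 0 ≤ᵐ[μ] fun a => f a ^ p * g a ^ q := by
    filter_upwards [hf, hg] with a hfa hga
    exact mul_nonneg (rpow_nonneg hfa p) (rpow_nonneg hga q)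
  have hf₀ := integral_nonneg_of_ae hf
  have hg₀ := integral_nonneg_of_ae hg
  rw [← ENNReal.ofReal_le_ofReal_iff (by positivity),
    ofReal_integral_eq_lintegral_ofReal (integrable_rpow_mul_rpow hf hg hfi hgi hp hq hpq) hfg,
    ENNReal.ofReal_mul (by positivity), ← ENNReal.ofReal_rpow_of_nonneg hf₀ hp,
    ← ENNReal.ofReal_rpow_of_nonneg hg₀ hq,
    ofReal_integral_eq_lintegral_ofReal hfi hf, ofReal_integral_eq_lintegral_ofReal hgi hg]
  calc ∫⁻ a, ENNReal.ofReal (f a ^ p * g a ^ q) ∂μ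
      = ∫⁻ a, ENNReal.ofReal (f a) ^ p * ENNReal.ofReal (g a) ^ q ∂μ := by
        refine lintegral_congr_ae ?_
        filter_upwards [hf, hg] with a hfa hga
        rw [ENNReal.ofReal_mul (rpow_nonneg hfa p), ENNReal.ofReal_rpow_of_nonneg hfa hp,
          ENNReal.ofReal_rpow_of_nonneg hga hq]
    _ ≤ _ := ENNReal.lintegral_mul_norm_pow_le hfi.aemeasurable.ennreal_ofReal
        hgi.aemeasurable.ennreal_ofReal hp hq hpq

end Holder

namespace ConvexOn

variable {S : Set ℝ} {f : ℝ → ℝ} {f' x y : ℝ}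

lemma add_mul_sub_le_of_hasDerivAt (hf : ConvexOn ℝ S f) (hx : x ∈ S) (hy : y ∈ S)
    (hf' : HasDerivAt f f' x) : f x + f' * (y - x) ≤ f y := by
  rcases lt_trichotomy x y with hxy | rfl | hxy
  · have := hf.le_slope_of_hasDerivAt hx hy hxy hf'
    rw [slope_def_field, le_div_iff₀ (sub_pos.2 hxy)] at this
    linarith
  · simp
  · have := hf.slope_le_of_hasDerivAt hy hx hxy hf'
    rw [slope_def_field, div_le_iff₀ (sub_pos.2 hxy)] at this
    linarith

end ConvexOn

namespace HolderEntropy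

noncomputable def phi (β x : ℝ) : ℝ := x ^ β - 1 - β * (x - 1)

noncomputable def psi (β x : ℝ) : ℝ := phi β x ^ (1 / β)

noncomputable def psiDeriv (β x : ℝ) : ℝ := (x ^ (β - 1) - 1) * phi β x ^ (1 / β - 1)

variable {β x y : ℝ}

lemma phi_nonneg (hβ : 1 ≤ β) (hx : 0 ≤ x) : 0 ≤ phi β x := by
  have := one_add_mul_self_le_rpow_one_add (s := x - 1) (by linarith) hβ
  rw [add_sub_cancel] at this
  simp only [phi]
  linarith

lemma phi_pos (hβ : 1 < β) (hx : 0 ≤ x) (hx1 : x ≠ 1) : 0 < phi β x := by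
  have := one_add_mul_self_lt_rpow_one_add (s := x - 1) (by linarith) (sub_ne_zero.2 hx1) hβ
  rw [add_sub_cancel] at this
  simp only [phi]
  linarith

lemma hasDerivAt_phi (hβ : 1 ≤ β) (x : ℝ) : HasDerivAt (phi β) (β * x ^ (β - 1) - β) x :=
  (((hasDerivAt_rpow_const (Or.inr hβ)).sub_const 1).sub
    (((hasDerivAt_id x).sub_const 1).const_mul β)).congr_deriv (by ring)

lemma continuous_psi (hβ : 1 ≤ β) : Continuous (psi β) :=
  (continuous_iff_continuousAt.2 fun x => (hasDerivAt_phi hβ x).continuousAt).rpow_const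
    fun _ => Or.inr (by positivity)

lemma hasDerivAt_psi (hβ : 1 < β) (hpx : 0 < phi β x) :
    HasDerivAt (psi β) (psiDeriv β x) x := by
  refine ((hasDerivAt_phi hβ.le x).rpow_const (p := 1 / β) (Or.inl hpx.ne')).congr_deriv ?_
  simp only [psiDeriv]
  field_simp

lemma hasDerivAt_psiDeriv (hβ : 1 < β) (hx : 0 < x) (hpx : 0 < phi β x) :
    HasDerivAt (psiDeriv β)
      ((β - 1) * (x ^ (β - 2) * phi β x - (x ^ (β - 1) - 1) ^ 2) * phi β x ^ (1 / β - 2)) x := by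
  refine (((hasDerivAt_rpow_const (p := β - 1) (Or.inl hx.ne')).sub_const 1).mul
    ((hasDerivAt_phi hβ.le x).rpow_const (p := 1 / β - 1) (Or.inl hpx.ne'))).congr_deriv ?_
  have hφ : phi β x ^ (1 / β - 1) = phi β x ^ (1 / β - 2) * phi β x := by
    rw [← rpow_add_one hpx.ne']; ring_nf
  rw [hφ, show β - 1 - 1 = β - 2 by ring, show 1 / β - 1 - 1 = 1 / β - 2 by ring]
  field_simp
  ring

lemma sq_rpow_sub_one_le_rpow_mul_phi (hβ1 : 1 < β) (hβ2 : β ≤ 2) (hx : 0 < x) :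
    (x ^ (β - 1) - 1) ^ 2 ≤ x ^ (β - 2) * phi β x := by
  have amgm : 1 ≤ (β - 1) * x ^ (β - 2) + (2 - β) * x ^ (β - 1) := by
    calc (1 : ℝ) = (x ^ (β - 2)) ^ (β - 1) * (x ^ (β - 1)) ^ (2 - β) := by
          rw [← rpow_mul hx.le, ← rpow_mul hx.le, ← rpow_add hx]; ring_nf; simp
      _ ≤ _ := geom_mean_le_arith_mean2_weighted (by linarith) (by linarith)
          (rpow_nonneg hx.le _) (rpow_nonneg hx.le _) (by ring)
  have h1 : x ^ (β - 2) * x ^ β = x ^ (β - 1) * x ^ (β - 1) := by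
    rw [← rpow_add hx, ← rpow_add hx]; ring_nf
  have h2 : x ^ (β - 2) * x = x ^ (β - 1) := by
    rw [← rpow_add_one hx.ne']; ring_nf
  simp only [phi]
  nlinarith

lemma convexOn_psi (hβ1 : 1 < β) (hβ2 : β ≤ 2) {S : Set ℝ} (hS : Convex ℝ S)
    (hS0 : S ⊆ Ici 0) (hS1 : 1 ∉ S) : ConvexOn ℝ S (psi β) := by
  have hint : ∀ x ∈ interior S, 0 < x ∧ 0 < phi β x := fun x hx => by
    have hx0 : 0 < x := by simpa using interior_mono hS0 hx
    exact ⟨hx0, phi_pos hβ1 hx0.le (ne_of_mem_of_not_mem (interior_subset hx) hS1)⟩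
  have hd : ∀ x ∈ interior S, HasDerivAt (psiDeriv β) _ x := fun x hx =>
    hasDerivAt_psiDeriv hβ1 (hint x hx).1 (hint x hx).2
  have hmono : MonotoneOn (psiDeriv β) (interior S) := by
    refine monotoneOn_of_deriv_nonneg hS.interior
      (fun x hx => (hd x hx).continuousAt.continuousWithinAt) ?_ ?_ <;> rw [interior_interior]
    · exact fun x hx => (hd x hx).differentiableAt.differentiableWithinAt
    · intro x hx
      rw [(hd x hx).deriv]
      have := sq_rpow_sub_one_le_rpow_mul_phi hβ1 hβ2 (hint x hx).1
      exact mul_nonneg (mul_nonneg (by linarith) (by linarith))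
        (rpow_nonneg (hint x hx).2.le _)
  refine MonotoneOn.convexOn_of_deriv hS (continuous_psi hβ1.le).continuousOn
    (fun x hx => (hasDerivAt_psi hβ1 (hint x hx).2).differentiableAt.differentiableWithinAt)
    (hmono.congr fun x hx => (hasDerivAt_psi hβ1 (hint x hx).2).deriv.symm)

lemma phi_rpow_mul_tangent_eq (hβ : 1 < β) (hx : 0 ≤ x) (hpx : 0 < phi β x) (y : ℝ) :
    phi β x ^ ((β - 1) / β) * (psi β x + psiDeriv β x * (y - x)) =
      x ^ (β - 1) * y + (1 - β) * x - y + β - 1 := by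
  have hβ0 : β ≠ 0 := by positivity
  have hψ : phi β x ^ ((β - 1) / β) * psi β x = phi β x := by
    rw [psi, ← rpow_add hpx, show (β - 1) / β + 1 / β = 1 by field_simp; ring, rpow_one]
  have hψ' : phi β x ^ ((β - 1) / β) * phi β x ^ (1 / β - 1) = 1 := by
    rw [← rpow_add hpx, show (β - 1) / β + (1 / β - 1) = 0 by field_simp; ring, rpow_zero]
  have hxβ : x ^ (β - 1) * x = x ^ β := by
    rw [← rpow_add_one' hx (by linarith), sub_add_cancel]
  have hφ : phi β x = x ^ β - 1 - β * (x - 1) := rfl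
  rw [mul_add, hψ, psiDeriv]
  linear_combination (x ^ (β - 1) - 1) * (y - x) * hψ' + hφ - hxβ

lemma le_phi_rpow_mul_phi_rpow_of_mem (hβ1 : 1 < β) (hβ2 : β ≤ 2) {S : Set ℝ} (hS : Convex ℝ S)
    (hS0 : S ⊆ Ici 0) (hS1 : 1 ∉ S) (hx : x ∈ S) (hy : y ∈ S) :
    x ^ (β - 1) * y + (1 - β) * x - y + β - 1 ≤ phi β x ^ ((β - 1) / β) * phi β y ^ (1 / β) := by
  have hpx : 0 < phi β x := phi_pos hβ1 (hS0 hx) (ne_of_mem_of_not_mem hx hS1)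
  rw [← phi_rpow_mul_tangent_eq hβ1 (hS0 hx) hpx]
  exact mul_le_mul_of_nonneg_left ((convexOn_psi hβ1 hβ2 hS hS0 hS1).add_mul_sub_le_of_hasDerivAt
    hx hy (hasDerivAt_psi hβ1 hpx)) (rpow_nonneg hpx.le _)

lemma rpow_mul_add_nonpos_of_mul_nonpos (hβ1 : 1 < β) (hβ2 : β ≤ 2) (hx : 0 ≤ x)
    (hxy : (x - 1) * (y - 1) ≤ 0) : x ^ (β - 1) * y + (1 - β) * x - y + β - 1 ≤ 0 := by
  have bernoulli : x ^ (β - 1) ≤ 1 + (β - 1) * (x - 1) := by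
    simpa using rpow_one_add_le_one_add_mul_self (s := x - 1) (by linarith) (by linarith)
      (by linarith : β - 1 ≤ 1)
  have hsign : 0 ≤ (x ^ (β - 1) - 1) * (x - 1) := by
    rcases le_total x 1 with h | h
    · have := rpow_le_one hx h (by linarith : 0 ≤ β - 1)
      exact mul_nonneg_of_nonpos_of_nonpos (by linarith) (by linarith)
    · have := one_le_rpow h (by linarith : 0 ≤ β - 1)
      exact mul_nonneg (by linarith) (by linarith)
  -- the left side is `(x ^ (β - 1) - 1) * (y - 1) + (x ^ (β - 1) - 1 - (β - 1) * (x - 1))`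
  rcases eq_or_ne x 1 with rfl | hx1
  · simp
  · have : (x ^ (β - 1) - 1) * (y - 1) ≤ 0 := by
      have := mul_nonpos_of_nonneg_of_nonpos hsign hxy
      nlinarith [sq_pos_of_ne_zero (sub_ne_zero.2 hx1)]
    linarith

lemma rpow_mul_add_le_phi_rpow_mul_phi_rpow (hβ1 : 1 < β) (hβ2 : β ≤ 2) (hx : 0 ≤ x)
    (hy : 0 ≤ y) :
    x ^ (β - 1) * y + (1 - β) * x - y + β - 1 ≤ phi β x ^ ((β - 1) / β) * phi β y ^ (1 / β) := by
  rcases le_or_gt ((x - 1) * (y - 1)) 0 with hxy | hxy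
  · exact (rpow_mul_add_nonpos_of_mul_nonpos hβ1 hβ2 hx hxy).trans
      (mul_nonneg (rpow_nonneg (phi_nonneg hβ1.le hx) _) (rpow_nonneg (phi_nonneg hβ1.le hy) _))
  rcases lt_or_gt_of_ne (fun h : x = 1 => by simp [h] at hxy) with hx1 | hx1
  · have hy1 : y < 1 := by nlinarith
    exact le_phi_rpow_mul_phi_rpow_of_mem hβ1 hβ2 (convex_Ico 0 1) Ico_subset_Ici_self
      (fun h => h.2.false) ⟨hx, hx1⟩ ⟨hy, hy1⟩
  · have hy1 : 1 < y := by nlinarith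
    exact le_phi_rpow_mul_phi_rpow_of_mem hβ1 hβ2 (convex_Ioi 1)
      (fun z hz => mem_Ici.2 (zero_lt_one.trans hz).le) (lt_irrefl (1 : ℝ)) hx1 hy1

end HolderEntropy

open HolderEntropy

theorem holder_entropy_step_general {Ω : Type*} [MeasurableSpace Ω] (μ : Measure Ω)
    [IsProbabilityMeasure μ] (β : ℝ) (hβ1 : 1 < β) (hβ2 : β ≤ 2)
    (φ : ℝ → ℝ) (hφ : ∀ x : ℝ, φ x = x ^ β - 1 - β * (x - 1))
    (h₁ h₂ : Ω → ℝ)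
    (hpos₁ : ∀ ω, 0 ≤ h₁ ω) (hpos₂ : ∀ ω, 0 ≤ h₂ ω)
    (hint₁ : ∫ ω, h₁ ω ∂μ = 1) (hint₂ : ∫ ω, h₂ ω ∂μ = 1)
    (hI : Integrable (fun ω => h₁ ω ^ (β - 1) * h₂ ω) μ)
    (hIφ₁ : Integrable (fun ω => φ (h₁ ω)) μ)
    (hIφ₂ : Integrable (fun ω => φ (h₂ ω)) μ) :
    (∫ ω, h₁ ω ^ (β - 1) * h₂ ω ∂μ) - 1 ≤
      (∫ ω, φ (h₁ ω) ∂μ) ^ ((β - 1) / β) * (∫ ω, φ (h₂ ω) ∂μ) ^ (1 / β) := by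
  obtain rfl : φ = phi β := funext hφ
  have hh₁ : Integrable h₁ μ := .of_integral_ne_zero (by simp [hint₁])
  have hh₂ : Integrable h₂ μ := .of_integral_ne_zero (by simp [hint₂])
  have hφ₁ : 0 ≤ᵐ[μ] fun ω => phi β (h₁ ω) := .of_forall fun ω => phi_nonneg hβ1.le (hpos₁ ω)
  have hφ₂ : 0 ≤ᵐ[μ] fun ω => phi β (h₂ ω) := .of_forall fun ω => phi_nonneg hβ1.le (hpos₂ ω)
  have hexp : (β - 1) / β + 1 / β = 1 := by field_simp; ring
  calc (∫ ω, h₁ ω ^ (β - 1) * h₂ ω ∂μ) - 1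
      = ∫ ω, h₁ ω ^ (β - 1) * h₂ ω + (1 - β) * h₁ ω - h₂ ω + β - 1 ∂μ := by
        rw [integral_sub, integral_add, integral_sub, integral_add, integral_const_mul, hint₁,
          hint₂]
        · simp only [integral_const, probReal_univ, smul_eq_mul, one_mul]
          ring
        all_goals fun_prop
    _ ≤ ∫ ω, phi β (h₁ ω) ^ ((β - 1) / β) * phi β (h₂ ω) ^ (1 / β) ∂μ := by
        refine integral_mono (by fun_prop) ?_ fun ω =>
          rpow_mul_add_le_phi_rpow_mul_phi_rpow hβ1 hβ2 (hpos₁ ω) (hpos₂ ω)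
        exact integrable_rpow_mul_rpow hφ₁ hφ₂ hIφ₁ hIφ₂ (by positivity) (by positivity) hexp
    _ ≤ _ := integral_rpow_mul_rpow_le hφ₁ hφ₂ hIφ₁ hIφ₂ (by positivity) (by positivity) hexp

theorem holder_entropy_step {Ω : Type*} [MeasurableSpace Ω] (μ : Measure Ω)
    [IsProbabilityMeasure μ] (β : ℝ) (hβ1 : 1 < β) (hβ2 : β ≤ 2)
    (φ : ℝ → ℝ) (hφ : ∀ x : ℝ, φ x = x ^ β - 1 - β * (x - 1))
    (h₁ h₂ : Ω → ℝ) (hm₁ : Measurable h₁) (hm₂ : Measurable h₂)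
    (hpos₁ : ∀ ω, 0 ≤ h₁ ω) (hpos₂ : ∀ ω, 0 ≤ h₂ ω)
    (hint₁ : ∫ ω, h₁ ω ∂μ = 1) (hint₂ : ∫ ω, h₂ ω ∂μ = 1)
    (hI : Integrable (fun ω => h₁ ω ^ (β - 1) * h₂ ω) μ)
    (hIφ₁ : Integrable (fun ω => φ (h₁ ω)) μ)
    (hIφ₂ : Integrable (fun ω => φ (h₂ ω)) μ) :
    (∫ ω, h₁ ω ^ (β - 1) * h₂ ω ∂μ) - 1 ≤
      (∫ ω, φ (h₁ ω) ∂μ) ^ ((β - 1) / β) * (∫ ω, φ (h₂ ω) ∂μ) ^ (1 / β) :=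
  holder_entropy_step_general μ β hβ1 hβ2 φ hφ h₁ h₂ hpos₁ hpos₂ hint₁ hint₂ hI hIφ₁ hIφ₂
end

section
/- Fundamental identity for the operator ∂_t(k∗·): let k ∈ C^1((0,∞)) ∩ L¹_loc be nonnegative and nonincreasing, ψ ∈ C^1(I) for an interval I, and u : [0,T] → I sufficiently smooth. Then for t ∈ (0,T): ψ'(u(t)) d/dt (k∗u)(t) = d/dt (k∗ψ(u))(t) + (ψ'(u(t))u(t) - ψ(u(t))) k(t) + ∫₀ᵗ (ψ(u(t-s)) - ψ(u(t)) - ψ'(u(t))[u(t-s)-u(t)]) (-k'(s)) ds. -/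
open Real Set MeasureTheory intervalIntegral Filter Topology Asymptotics

private lemma kInt {k : ℝ → ℝ} (hkloc : ∀ a : ℝ, 0 < a → IntegrableOn k (Ioc 0 a))
    {t : ℝ} (ht : 0 < t) : IntervalIntegrable k volume 0 t := by
  rw [intervalIntegrable_iff_integrableOn_Ioc_of_le ht.le]
  exact hkloc t ht

private lemma k_deriv_cont {k : ℝ → ℝ} (hk1 : ContDiffOn ℝ 1 k (Ioi 0)) :
    ContinuousOn (deriv k) (Ioi 0) := by
  have h := hk1.continuousOn_derivWithin (isOpen_Ioi.uniqueDiffOn) le_rfl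
  exact h.congr fun x hx => (derivWithin_of_isOpen isOpen_Ioi hx).symm

private lemma k_hasDeriv {k : ℝ → ℝ} (hk1 : ContDiffOn ℝ 1 k (Ioi 0)) {x : ℝ} (hx : 0 < x) :
    HasDerivAt k (deriv k x) x := by
  have : DifferentiableAt ℝ k x :=
    (hk1.differentiableOn one_ne_zero).differentiableAt (isOpen_Ioi.mem_nhds hx)
  exact this.hasDerivAt

private lemma k_deriv_nonpos {k : ℝ → ℝ} (hk1 : ContDiffOn ℝ 1 k (Ioi 0))
    (hkmono : AntitoneOn k (Ioi 0)) {x : ℝ} (hx : 0 < x) : deriv k x ≤ 0 := by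
  have hd := k_hasDeriv hk1 hx
  have h1 : Tendsto (fun y => (k y - k x) / (y - x)) (𝓝[>] x) (𝓝 (deriv k x)) := by
    have := hd.hasDerivWithinAt (s := Ioi x)
    rw [hasDerivWithinAt_iff_tendsto_slope] at this
    have hsub : 𝓝[>] x ≤ 𝓝[Ioi x \ {x}] x := nhdsWithin_mono _ (by intro y hy; exact ⟨hy, ne_of_gt hy⟩)
    exact (this.mono_left hsub).congr (fun y => by rw [slope_def_field])
  have h2 : ∀ᶠ y in 𝓝[>] x, (k y - k x) / (y - x) ≤ 0 := by
    filter_upwards [Ioo_mem_nhdsGT_of_mem (Set.left_mem_Ico.2 (lt_add_one x))] with y hy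
    have hyx : x < y := hy.1
    have : k y ≤ k x := hkmono hx (lt_trans hx hyx) hyx.le
    exact div_nonpos_of_nonpos_of_nonneg (by linarith) (by linarith)
  exact le_of_tendsto h1 h2

/-- `ε * k ε → 0` as `ε → 0⁺`. -/
private lemma k_lim {k : ℝ → ℝ} (hkloc : ∀ a : ℝ, 0 < a → IntegrableOn k (Ioc 0 a))
    (hknn : ∀ s : ℝ, 0 < s → 0 ≤ k s) (hkmono : AntitoneOn k (Ioi 0)) :
    Tendsto (fun ε => ε * k ε) (𝓝[>] (0:ℝ)) (𝓝 0) := by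
  have hK : ContinuousOn (fun x => ∫ s in (0:ℝ)..x, k s) (uIcc (0:ℝ) 1) :=
    continuousOn_primitive_interval' (kInt hkloc one_pos) left_mem_uIcc
  have hKt : Tendsto (fun x => ∫ s in (0:ℝ)..x, k s) (𝓝[>] (0:ℝ)) (𝓝 0) := by
    have h := (hK 0 left_mem_uIcc).tendsto
    rw [intervalIntegral.integral_same] at h
    refine h.mono_left ?_
    rw [← nhdsWithin_Ioo_eq_nhdsGT one_pos]
    refine nhdsWithin_mono _ (fun x hx => ?_)
    rw [uIcc_of_le zero_le_one]; exact ⟨hx.1.le, hx.2.le⟩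
  have hhalf : Tendsto (fun ε : ℝ => ε / 2) (𝓝[>] (0:ℝ)) (𝓝[>] (0:ℝ)) := by
    apply tendsto_nhdsWithin_of_tendsto_nhds_of_eventually_within
    · have h : Tendsto (fun ε : ℝ => ε / 2) (𝓝 (0:ℝ)) (𝓝 ((0:ℝ)/2)) := (tendsto_id.div_const (2:ℝ))
      simpa using h.mono_left nhdsWithin_le_nhds
    · filter_upwards [self_mem_nhdsWithin] with x hx
      exact half_pos (show (0:ℝ) < x from hx)
  have hg : Tendsto (fun ε : ℝ => 2 * ((∫ s in (0:ℝ)..ε, k s) - ∫ s in (0:ℝ)..(ε/2), k s))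
      (𝓝[>] (0:ℝ)) (𝓝 0) := by
    have h := (hKt.sub (hKt.comp hhalf)).const_mul (2:ℝ)
    simpa using h
  refine squeeze_zero' ?_ ?_ hg
  · filter_upwards [self_mem_nhdsWithin] with ε hε
    exact mul_nonneg (le_of_lt hε) (hknn ε hε)
  · filter_upwards [self_mem_nhdsWithin] with ε hε0
    replace hε0 : (0:ℝ) < ε := hε0
    have hsub : Ioc (ε/2) ε ⊆ Ioc 0 ε := fun x hx => ⟨lt_trans (half_pos hε0) hx.1, hx.2⟩
    have hki : IntervalIntegrable k volume (ε/2) ε := by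
      rw [intervalIntegrable_iff_integrableOn_Ioc_of_le (by linarith)]
      exact (hkloc ε hε0).mono_set hsub
    have hmono : ∫ s in (ε/2)..ε, (fun _ => k ε) s ≤ ∫ s in (ε/2)..ε, k s := by
      apply intervalIntegral.integral_mono_on (by linarith) intervalIntegrable_const hki
      intro x hx
      exact hkmono (mem_Ioi.2 (lt_of_lt_of_le (half_pos hε0) hx.1)) (mem_Ioi.2 hε0) hx.2
    rw [intervalIntegral.integral_const, smul_eq_mul] at hmono
    have heq : ∫ s in (ε/2)..ε, k s = (∫ s in (0:ℝ)..ε, k s) - ∫ s in (0:ℝ)..(ε/2), k s := by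
      have h := intervalIntegral.integral_add_adjacent_intervals
        (kInt hkloc (half_pos hε0)) hki
      linarith
    have h2 : (ε - ε/2) * k ε = ε/2 * k ε := by ring
    have h3 : ε * k ε = 2 * (ε/2 * k ε) := by ring
    linarith


private lemma conv_hasDerivAt {k : ℝ → ℝ} (hk1 : ContDiffOn ℝ 1 k (Ioi 0))
    (hkloc : ∀ a : ℝ, 0 < a → IntegrableOn k (Ioc 0 a))
    {v : ℝ → ℝ} (hv : ContDiff ℝ 1 v) {t : ℝ} (ht : 0 < t) :
    HasDerivAt (fun r => ∫ σ in (0:ℝ)..r, k σ * v (r - σ))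
      (k t * v 0 + ∫ σ in (0:ℝ)..t, k σ * deriv v (t - σ)) t := by
  have hvc : Continuous v := hv.continuous
  have hv' : Continuous (deriv v) := hv.continuous_deriv le_rfl
  have hvd : ∀ x : ℝ, HasDerivAt v (deriv v x) x := fun x =>
    (hv.differentiable one_ne_zero x).hasDerivAt
  have hIoc : Set.uIoc (0:ℝ) t = Ioc 0 t := uIoc_of_le ht.le
  have hkm : AEStronglyMeasurable k (volume.restrict (Set.uIoc (0:ℝ) t)) := by
    rw [hIoc]
    exact (hk1.continuousOn.mono Ioc_subset_Ioi_self).aestronglyMeasurable measurableSet_Ioc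
  obtain ⟨M, hM⟩ := (isCompact_Icc (a := (-1:ℝ)) (b := t + 1)).exists_bound_of_continuousOn
    hv'.continuousOn
  have hmem : ∀ {x σ : ℝ}, x ∈ Metric.ball t 1 → σ ∈ Set.uIoc (0:ℝ) t → x - σ ∈ Icc (-1:ℝ) (t + 1) := by
    intro x σ hx hσ
    rw [hIoc] at hσ
    rw [Metric.mem_ball, Real.dist_eq] at hx
    have h1 := abs_lt.mp hx
    constructor <;> [skip; skip] <;> cases hσ with | intro h2 h3 => · linarith
  -- derivative of the fixed-endpoint part
  have hΦ := intervalIntegral.hasDerivAt_integral_of_dominated_loc_of_deriv_le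
    (F := fun x σ => k σ * v (x - σ)) (F' := fun x σ => k σ * deriv v (x - σ))
    (x₀ := t) (a := (0:ℝ)) (b := t) (μ := volume) (bound := fun σ => |k σ| * M)
    (Metric.ball_mem_nhds t one_pos)
    (Eventually.of_forall fun x =>
      hkm.mul ((hvc.comp (continuous_const.sub continuous_id)).aestronglyMeasurable.restrict))
    ((kInt hkloc ht).mul_continuousOn
      (hvc.comp (continuous_const.sub continuous_id)).continuousOn)
    (hkm.mul ((hv'.comp (continuous_const.sub continuous_id)).aestronglyMeasurable.restrict))
    (ae_of_all _ fun σ hσ x hx => by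
      rw [norm_mul]
      exact mul_le_mul_of_nonneg_left (hM _ (hmem hx hσ)) (abs_nonneg _))
    ((kInt hkloc ht).norm.mul_const M)
    (ae_of_all _ fun σ hσ x hx => by
      simpa using ((hvd (x - σ)).comp x ((hasDerivAt_id x).sub_const σ)).const_mul (k σ))
  obtain ⟨-, hΦ⟩ := hΦ
  -- derivative of the moving-endpoint part
  have hE : HasDerivAt (fun r => ∫ σ in t..r, k σ * v (r - σ)) (k t * v 0) t := by
    rw [hasDerivAt_iff_isLittleO, Asymptotics.isLittleO_iff]
    intro c hc
    have hφ : ContinuousAt (fun p : ℝ × ℝ => k p.2 * v (p.1 - p.2)) (t, t) := by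
      have hk_t : ContinuousAt k t := hk1.continuousOn.continuousAt (isOpen_Ioi.mem_nhds ht)
      exact (hk_t.comp continuousAt_snd).mul
        (hvc.continuousAt.comp (continuousAt_fst.sub continuousAt_snd))
    obtain ⟨δ, hδ0, hδ⟩ := Metric.continuousAt_iff.mp hφ c hc
    filter_upwards [Metric.ball_mem_nhds t (lt_min hδ0 ht)] with r hr
    rw [Metric.mem_ball, Real.dist_eq, lt_min_iff] at hr
    obtain ⟨hrδ, hrt⟩ := hr
    have hr0 : 0 < r := by have := abs_lt.mp hrt; linarith
    have hki : IntervalIntegrable (fun σ => k σ * v (r - σ)) volume t r := by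
      apply IntervalIntegrable.mul_continuousOn
      · exact (kInt hkloc ht).symm.trans (kInt hkloc hr0)
      · exact (hvc.comp (continuous_const.sub continuous_id)).continuousOn
    have hsplit : (∫ σ in t..r, k σ * v (r - σ)) - (r - t) * (k t * v 0)
        = ∫ σ in t..r, (k σ * v (r - σ) - k t * v 0) := by
      rw [intervalIntegral.integral_sub hki intervalIntegrable_const,
        intervalIntegral.integral_const, smul_eq_mul]
    simp only [intervalIntegral.integral_same, sub_zero, smul_eq_mul]
    rw [hsplit]
    have hbound : ∀ σ ∈ Set.uIoc t r, ‖k σ * v (r - σ) - k t * v 0‖ ≤ c := by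
      intro σ hσ
      have hσ' : |σ - t| ≤ |r - t| := by
        rcases le_total t r with h | h
        · rw [uIoc_of_le h] at hσ
          have h1 := abs_lt.mp hrδ
          rw [abs_of_nonneg (by linarith [hσ.1.le] : (0:ℝ) ≤ σ - t),
            abs_of_nonneg (by linarith : (0:ℝ) ≤ r - t)]
          linarith [hσ.2]
        · rw [uIoc_of_ge h] at hσ
          rw [abs_of_nonpos (by linarith [hσ.2] : σ - t ≤ 0),
            abs_of_nonpos (by linarith : r - t ≤ 0)]
          linarith [hσ.1]
      have hdist : dist ((r, σ) : ℝ × ℝ) (t, t) < δ := by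
        rw [Prod.dist_eq]
        simp only [Real.dist_eq]
        exact max_lt hrδ (lt_of_le_of_lt hσ' hrδ)
      have := hδ hdist
      rw [Real.dist_eq] at this
      have h0 : v (t - t) = v 0 := by norm_num
      rw [← h0]
      exact le_of_lt this
    calc ‖∫ σ in t..r, (k σ * v (r - σ) - k t * v 0)‖
        ≤ c * |r - t| := intervalIntegral.norm_integral_le_of_norm_le_const hbound
      _ = c * ‖r - t‖ := by rw [Real.norm_eq_abs]
  -- combine
  have heq : (fun r => ∫ σ in (0:ℝ)..r, k σ * v (r - σ)) =ᶠ[𝓝 t]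
      (fun r => (∫ σ in (0:ℝ)..t, k σ * v (r - σ)) + ∫ σ in t..r, k σ * v (r - σ)) := by
    filter_upwards [Metric.ball_mem_nhds t ht] with r hr
    rw [Metric.mem_ball, Real.dist_eq] at hr
    have hr0 : 0 < r := by have := abs_lt.mp hr; linarith
    have i1 : IntervalIntegrable (fun σ => k σ * v (r - σ)) volume 0 t :=
      (kInt hkloc ht).mul_continuousOn
        (hvc.comp (continuous_const.sub continuous_id)).continuousOn
    have i2 : IntervalIntegrable (fun σ => k σ * v (r - σ)) volume t r :=
      ((kInt hkloc ht).symm.trans (kInt hkloc hr0)).mul_continuousOn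
        (hvc.comp (continuous_const.sub continuous_id)).continuousOn
    exact (intervalIntegral.integral_add_adjacent_intervals i1 i2).symm
  have h := (hΦ.add hE).congr_of_eventuallyEq heq
  simpa [add_comm] using h

/-- `ε * k ε ≤ 2 ∫₀ᵗ k` for `ε ∈ (0, t]`. -/
private lemma eps_k_le {k : ℝ → ℝ} (hkloc : ∀ a : ℝ, 0 < a → IntegrableOn k (Ioc 0 a))
    (hknn : ∀ s : ℝ, 0 < s → 0 ≤ k s) (hkmono : AntitoneOn k (Ioi 0))
    {t : ℝ} (ht : 0 < t) {ε : ℝ} (hε : ε ∈ Ioc 0 t) :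
    ε * k ε ≤ 2 * ∫ σ in (0:ℝ)..t, k σ := by
  obtain ⟨hε0, hεt⟩ := hε
  have knn : ∀ a b : ℝ, 0 ≤ a → a ≤ b → 0 ≤ ∫ σ in a..b, k σ := by
    intro a b ha hab
    rw [intervalIntegral.integral_of_le hab]
    exact setIntegral_nonneg measurableSet_Ioc fun x hx => hknn x (lt_of_le_of_lt ha hx.1)
  have i1 : IntervalIntegrable k volume 0 (ε/2) := kInt hkloc (half_pos hε0)
  have i2 : IntervalIntegrable k volume (ε/2) ε :=
    (kInt hkloc (half_pos hε0)).symm.trans (kInt hkloc hε0)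
  have i3 : IntervalIntegrable k volume ε t := (kInt hkloc hε0).symm.trans (kInt hkloc ht)
  have hmono : (ε - ε/2) * k ε ≤ ∫ s in (ε/2)..ε, k s := by
    have h := intervalIntegral.integral_mono_on (f := fun _ => k ε) (by linarith)
      intervalIntegrable_const i2
      (fun x hx => hkmono (mem_Ioi.2 (lt_of_lt_of_le (half_pos hε0) hx.1)) (mem_Ioi.2 hε0) hx.2)
    rwa [intervalIntegral.integral_const, smul_eq_mul] at h
  have split1 : (∫ s in (0:ℝ)..(ε/2), k s) + ∫ s in (ε/2)..ε, k s = ∫ s in (0:ℝ)..ε, k s :=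
    intervalIntegral.integral_add_adjacent_intervals i1 i2
  have split2 : (∫ s in (0:ℝ)..ε, k s) + ∫ s in ε..t, k s = ∫ s in (0:ℝ)..t, k s :=
    intervalIntegral.integral_add_adjacent_intervals (kInt hkloc hε0) i3
  have n1 : 0 ≤ ∫ s in (0:ℝ)..(ε/2), k s := knn _ _ le_rfl (by linarith)
  have n3 : 0 ≤ ∫ s in ε..t, k s := knn _ _ hε0.le hεt
  have h2 : (ε - ε/2) * k ε = ε/2 * k ε := by ring
  have h3 : ε * k ε = 2 * (ε/2 * k ε) := by ring
  linarith

private lemma ibp_limit {k : ℝ → ℝ} (hk1 : ContDiffOn ℝ 1 k (Ioi 0))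
    (hkloc : ∀ a : ℝ, 0 < a → IntegrableOn k (Ioc 0 a))
    (hknn : ∀ s : ℝ, 0 < s → 0 ≤ k s) (hkmono : AntitoneOn k (Ioi 0))
    {b : ℝ → ℝ} (hb : ContDiff ℝ 1 b) {t : ℝ} (ht : 0 < t) (hbt : b t = 0) :
    (∫ σ in (0:ℝ)..t, b (t - σ) * (-(deriv k σ)))
      = -(b 0 * k t) - ∫ σ in (0:ℝ)..t, k σ * deriv b (t - σ) := by
  have hbc : Continuous b := hb.continuous
  have hb' : Continuous (deriv b) := hb.continuous_deriv le_rfl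
  have hbd : ∀ x : ℝ, HasDerivAt b (deriv b x) x := fun x =>
    (hb.differentiable one_ne_zero x).hasDerivAt
  obtain ⟨M, hM⟩ := (isCompact_Icc (a := (0:ℝ)) (b := t)).exists_bound_of_continuousOn
    hb'.continuousOn
  have hM0 : 0 ≤ M := le_trans (norm_nonneg _) (hM 0 ⟨le_rfl, ht.le⟩)
  -- Lipschitz bound : |b (t - σ)| ≤ M * σ for σ ∈ [0,t]
  have hlip : ∀ σ ∈ Icc (0:ℝ) t, |b (t - σ)| ≤ M * σ := by
    intro σ hσ
    have h := Convex.norm_image_sub_le_of_norm_hasDerivWithin_le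
      (f := b) (f' := deriv b) (s := Icc (0:ℝ) t) (C := M) (x := t) (y := t - σ)
      (fun x hx => (hbd x).hasDerivWithinAt) hM (convex_Icc _ _)
      (right_mem_Icc.2 ht.le) ⟨by linarith [hσ.2], by linarith [hσ.1]⟩
    rw [hbt, sub_zero] at h
    calc |b (t - σ)| ≤ M * ‖t - σ - t‖ := h
      _ = M * σ := by rw [Real.norm_eq_abs]; rw [abs_of_nonpos (by linarith [hσ.1])]; ring_nf
  -- continuity of deriv k and of g := σ * (-(deriv k σ)) on (0,∞)
  have hk'c : ContinuousOn (deriv k) (Ioi 0) := k_deriv_cont hk1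
  have hgc : ContinuousOn (fun σ : ℝ => σ * (-(deriv k σ))) (Ioi 0) :=
    continuousOn_id.mul hk'c.neg
  have hgnn : ∀ σ : ℝ, 0 < σ → 0 ≤ σ * (-(deriv k σ)) := fun σ hσ =>
    mul_nonneg hσ.le (neg_nonneg.2 (k_deriv_nonpos hk1 hkmono hσ))
  -- interval IBP identity valid for 0 < ε < t
  have hibp : ∀ ε : ℝ, 0 < ε → ε ≤ t →
      ∫ σ in ε..t, σ * deriv k σ = t * k t - ε * k ε - ∫ σ in ε..t, k σ := by
    intro ε hε0 hεt
    have hsub : uIcc ε t ⊆ Ioi 0 := by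
      rw [uIcc_of_le hεt]; exact fun x hx => lt_of_lt_of_le hε0 hx.1
    have h := intervalIntegral.integral_mul_deriv_eq_deriv_mul
      (u := fun x => x) (u' := fun _ => (1:ℝ)) (v := k) (v' := deriv k)
      (fun x _ => hasDerivAt_id x) (fun x hx => k_hasDeriv hk1 (hsub hx))
      intervalIntegrable_const ((hk'c.mono hsub).intervalIntegrable)
    rw [h]
    simp [intervalIntegral.integral_congr (g := k) (fun x _ => one_mul (k x))]
  -- integrability of g on (0, t]
  have hg : IntegrableOn (fun σ : ℝ => σ * (-(deriv k σ))) (Ioc 0 t) := by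
    have ha : Tendsto (fun n : ℕ => t / ((n:ℝ) + 2)) atTop (𝓝 0) := by
      have h1 : Tendsto (fun n : ℕ => ((n:ℝ) + 2)) atTop atTop :=
        tendsto_atTop_add_const_right atTop 2 tendsto_natCast_atTop_atTop
      exact h1.const_div_atTop t
    have hapos : ∀ n : ℕ, 0 < t / ((n:ℝ) + 2) := fun n => div_pos ht (by positivity)
    have hale : ∀ n : ℕ, t / ((n:ℝ) + 2) ≤ t := fun n =>
      div_le_self ht.le (by have := Nat.cast_nonneg (α := ℝ) n; linarith)
    refine integrableOn_Ioc_of_intervalIntegral_norm_bounded_left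
      (I := 3 * ∫ σ in (0:ℝ)..t, k σ) (a := fun n : ℕ => t / ((n:ℝ) + 2))
      (fun n => ?_) ha (Eventually.of_forall fun n => ?_)
    · have hsub : Icc (t / ((n:ℝ)+2)) t ⊆ Ioi 0 := fun x hx => lt_of_lt_of_le (hapos n) hx.1
      exact ((hgc.mono hsub).integrableOn_Icc.mono_set Ioc_subset_Icc_self)
    · set ε := t / ((n:ℝ) + 2) with hεdef
      have hε0 := hapos n
      have hεt := hale n
      have hsub : uIcc ε t ⊆ Ioi 0 := by
        rw [uIcc_of_le hεt]; exact fun x hx => lt_of_lt_of_le hε0 hx.1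
      have heq : ∫ x in Ioc ε t, ‖x * (-(deriv k x))‖
          = ∫ σ in ε..t, σ * (-(deriv k σ)) := by
        rw [← intervalIntegral.integral_of_le hεt]
        refine intervalIntegral.integral_congr fun x hx => ?_
        rw [Real.norm_eq_abs, abs_of_nonneg (hgnn x (hsub hx))]
      rw [heq]
      have hval : ∫ σ in ε..t, σ * (-(deriv k σ))
          = ε * k ε - t * k t + ∫ σ in ε..t, k σ := by
        have h1 : ∫ σ in ε..t, σ * (-(deriv k σ)) = -∫ σ in ε..t, σ * deriv k σ := by
          rw [← intervalIntegral.integral_neg]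
          exact intervalIntegral.integral_congr fun x _ => by ring
        rw [h1, hibp ε hε0 hεt]; ring
      rw [hval]
      have hbd1 : ε * k ε ≤ 2 * ∫ σ in (0:ℝ)..t, k σ :=
        eps_k_le hkloc hknn hkmono ht ⟨hε0, hεt⟩
      have hkt : 0 ≤ t * k t := mul_nonneg ht.le (hknn t ht)
      have hknn2 : 0 ≤ ∫ σ in (0:ℝ)..ε, k σ := by
        rw [intervalIntegral.integral_of_le hε0.le]
        exact setIntegral_nonneg measurableSet_Ioc fun x hx => hknn x hx.1
      have hsplit : (∫ σ in (0:ℝ)..ε, k σ) + ∫ σ in ε..t, k σ = ∫ σ in (0:ℝ)..t, k σ :=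
        intervalIntegral.integral_add_adjacent_intervals (kInt hkloc hε0)
          ((kInt hkloc hε0).symm.trans (kInt hkloc ht))
      linarith
  have hIocsub : Ioc (0:ℝ) t ⊆ Ioi 0 := fun x hx => hx.1
  have hfint : IntegrableOn (fun σ : ℝ => b (t - σ) * (-(deriv k σ))) (Ioc 0 t) := by
    refine Integrable.mono' (hg.const_mul M) ?_ ?_
    · exact (((hbc.comp (continuous_const.sub continuous_id)).continuousOn).mul
        ((hk'c.mono hIocsub).neg)).aestronglyMeasurable measurableSet_Ioc
    · refine ae_restrict_of_forall_mem measurableSet_Ioc fun σ hσ => ?_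
      have h1 : |b (t - σ)| ≤ M * σ := hlip σ ⟨hσ.1.le, hσ.2⟩
      have h2 : |(-(deriv k σ))| = -(deriv k σ) :=
        abs_of_nonneg (neg_nonneg.2 (k_deriv_nonpos hk1 hkmono hσ.1))
      have h3 : (0:ℝ) ≤ -(deriv k σ) := neg_nonneg.2 (k_deriv_nonpos hk1 hkmono hσ.1)
      calc ‖b (t - σ) * (-(deriv k σ))‖ = |b (t - σ)| * |(-(deriv k σ))| := by
            rw [norm_mul, Real.norm_eq_abs, Real.norm_eq_abs]
        _ ≤ (M * σ) * (-(deriv k σ)) := by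
            rw [h2]; exact mul_le_mul_of_nonneg_right h1 h3
        _ = M * (σ * (-(deriv k σ))) := by ring
  have h3int : IntegrableOn (fun σ : ℝ => k σ * deriv b (t - σ)) (Ioc 0 t) := by
    rw [← intervalIntegrable_iff_integrableOn_Ioc_of_le ht.le]
    exact (kInt hkloc ht).mul_continuousOn
      (hb'.comp (continuous_const.sub continuous_id)).continuousOn
  have key : ∀ f : ℝ → ℝ, IntegrableOn f (Ioc 0 t) →
      Tendsto (fun ε => ∫ σ in ε..t, f σ) (𝓝[>] (0:ℝ)) (𝓝 (∫ σ in (0:ℝ)..t, f σ)) := by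
    intro f hf
    have hIcc : IntegrableOn f (uIcc 0 t) := by
      rw [uIcc_of_le ht.le, integrableOn_Icc_iff_integrableOn_Ioc]; exact hf
    have h := (intervalIntegral.continuousOn_primitive_interval_left hIcc 0 left_mem_uIcc).tendsto
    refine h.mono_left ?_
    rw [← nhdsWithin_Ioo_eq_nhdsGT ht]
    refine nhdsWithin_mono _ fun x hx => ?_
    rw [uIcc_of_le ht.le]; exact ⟨hx.1.le, hx.2.le⟩
  have A1 := key _ hfint
  have A3 := key _ h3int
  have A2 : Tendsto (fun ε => b (t - ε) * k ε) (𝓝[>] (0:ℝ)) (𝓝 0) := by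
    apply squeeze_zero_norm' (a := fun ε => M * (ε * k ε))
    · filter_upwards [Ioo_mem_nhdsGT_of_mem (Set.left_mem_Ico.2 ht)] with ε hε
      have h1 : |b (t - ε)| ≤ M * ε := hlip ε ⟨hε.1.le, hε.2.le⟩
      calc ‖b (t - ε) * k ε‖ = |b (t - ε)| * |k ε| := by
            rw [norm_mul, Real.norm_eq_abs, Real.norm_eq_abs]
        _ ≤ (M * ε) * k ε := by
            rw [abs_of_nonneg (hknn ε hε.1)]
            exact mul_le_mul_of_nonneg_right h1 (hknn ε hε.1)
        _ = M * (ε * k ε) := by ring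
    · simpa using (k_lim hkloc hknn hkmono).const_mul M
  have A4 : (fun ε => b (t - ε) * k ε - b 0 * k t - ∫ σ in ε..t, k σ * deriv b (t - σ))
      =ᶠ[𝓝[>] (0:ℝ)] (fun ε => ∫ σ in ε..t, b (t - σ) * (-(deriv k σ))) := by
    filter_upwards [Ioo_mem_nhdsGT_of_mem (Set.left_mem_Ico.2 ht)] with ε hε
    have hε0 := hε.1
    have hεt := hε.2.le
    have hsub : uIcc ε t ⊆ Ioi 0 := by
      rw [uIcc_of_le hεt]; exact fun x hx => lt_of_lt_of_le hε0 hx.1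
    have hu : ∀ σ ∈ uIcc ε t, HasDerivAt (fun y => b (t - y)) (-(deriv b (t - σ))) σ := by
      intro σ _
      have h := (hbd (t - σ)).comp σ ((hasDerivAt_id σ).const_sub t)
      simpa [Function.comp_def] using h
    have hibp2 := intervalIntegral.integral_mul_deriv_eq_deriv_mul
      (u := fun y => b (t - y)) (u' := fun σ => -(deriv b (t - σ))) (v := k) (v' := deriv k)
      hu (fun x hx => k_hasDeriv hk1 (hsub hx))
      ((hb'.comp (continuous_const.sub continuous_id)).neg.intervalIntegrable _ _)
      ((hk'c.mono hsub).intervalIntegrable)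
    have e1 : ∫ σ in ε..t, b (t - σ) * (-(deriv k σ))
        = -∫ σ in ε..t, b (t - σ) * deriv k σ := by
      rw [← intervalIntegral.integral_neg]
      exact intervalIntegral.integral_congr fun x _ => by ring
    have e2 : ∫ σ in ε..t, (-(deriv b (t - σ))) * k σ
        = -∫ σ in ε..t, k σ * deriv b (t - σ) := by
      rw [← intervalIntegral.integral_neg]
      exact intervalIntegral.integral_congr fun x _ => by ring
    rw [e1, hibp2, e2]
    simp only [sub_self]
    ring
  have hlim2 : Tendsto (fun ε => b (t - ε) * k ε - b 0 * k t - ∫ σ in ε..t, k σ * deriv b (t - σ))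
      (𝓝[>] (0:ℝ)) (𝓝 (0 - b 0 * k t - ∫ σ in (0:ℝ)..t, k σ * deriv b (t - σ))) :=
    (A2.sub tendsto_const_nhds).sub A3
  have hfin := tendsto_nhds_unique (Tendsto.congr' A4 hlim2) A1
  linarith [hfin]

theorem fundamental_identity_nonlocal (T : ℝ) (hT : 0 < T) (I : Set ℝ)
    (k : ℝ → ℝ) (hk1 : ContDiffOn ℝ 1 k (Ioi 0))
    (hkloc : ∀ a : ℝ, 0 < a → IntegrableOn k (Ioc 0 a))
    (hknn : ∀ s : ℝ, 0 < s → 0 ≤ k s)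
    (hkmono : AntitoneOn k (Ioi 0))
    (ψ : ℝ → ℝ) (hψ : ContDiff ℝ 1 ψ)
    (u : ℝ → ℝ) (hu : ContDiff ℝ (⊤ : ℕ∞) u) (huI : ∀ s ∈ Icc 0 T, u s ∈ I) :
    ∀ t ∈ Ioo 0 T,
      deriv ψ (u t) * deriv (fun r => ∫ s in (0 : ℝ)..r, k (r - s) * u s) t =
        deriv (fun r => ∫ s in (0 : ℝ)..r, k (r - s) * ψ (u s)) t +
          (deriv ψ (u t) * u t - ψ (u t)) * k t +
          ∫ s in (0 : ℝ)..t,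
            (ψ (u (t - s)) - ψ (u t) - deriv ψ (u t) * (u (t - s) - u t)) *
              (-(deriv k s)) := by
  rintro t ⟨ht, htT⟩
  have hu1 : ContDiff ℝ 1 u := hu.of_le (by simp)
  have hudiff : ∀ x : ℝ, HasDerivAt u (deriv u x) x := fun x =>
    (hu1.differentiable one_ne_zero x).hasDerivAt
  have hψdiff : ∀ x : ℝ, HasDerivAt ψ (deriv ψ x) x := fun x =>
    (hψ.differentiable one_ne_zero x).hasDerivAt
  have hψu : ∀ r : ℝ, HasDerivAt (fun r => ψ (u r)) (deriv ψ (u r) * deriv u r) r := fun r =>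
    (hψdiff (u r)).comp r (hudiff r)
  have hψuC : ContDiff ℝ 1 (fun s => ψ (u s)) := hψ.comp hu1
  have huc : Continuous (deriv u) := hu1.continuous_deriv le_rfl
  have hψc : Continuous (deriv ψ) := hψ.continuous_deriv le_rfl
  -- substitution in the convolution integrals
  have hswap : ∀ v : ℝ → ℝ, (fun r => ∫ s in (0:ℝ)..r, k (r - s) * v s)
      = fun r => ∫ σ in (0:ℝ)..r, k σ * v (r - σ) := by
    intro v
    funext r
    have h := intervalIntegral.integral_comp_sub_left (a := (0:ℝ)) (b := r)
      (fun s => k (r - s) * v s) r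
    simp only [sub_sub_cancel, sub_zero, sub_self] at h
    exact h.symm
  have d1 : deriv (fun r => ∫ s in (0:ℝ)..r, k (r - s) * u s) t
      = k t * u 0 + ∫ σ in (0:ℝ)..t, k σ * deriv u (t - σ) := by
    rw [hswap u]
    exact (conv_hasDerivAt hk1 hkloc hu1 ht).deriv
  have d2 : deriv (fun r => ∫ s in (0:ℝ)..r, k (r - s) * ψ (u s)) t
      = k t * ψ (u 0) + ∫ σ in (0:ℝ)..t, k σ * (deriv ψ (u (t - σ)) * deriv u (t - σ)) := by
    rw [hswap (fun s => ψ (u s))]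
    rw [(conv_hasDerivAt hk1 hkloc hψuC ht).deriv]
    congr 1
    refine intervalIntegral.integral_congr fun σ _ => ?_
    rw [(hψu (t - σ)).deriv]
  set c := deriv ψ (u t) with hc
  set b : ℝ → ℝ := fun r => ψ (u r) - ψ (u t) - c * (u r - u t) with hbdef
  have hbC : ContDiff ℝ 1 b := (hψuC.sub contDiff_const).sub
    (contDiff_const.mul (hu1.sub contDiff_const))
  have hbt : b t = 0 := by simp [hbdef]
  have hbR := ibp_limit hk1 hkloc hknn hkmono hbC ht hbt
  have hbderiv : ∀ r : ℝ, deriv b r = deriv ψ (u r) * deriv u r - c * deriv u r := by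
    intro r
    have h : HasDerivAt b (deriv ψ (u r) * deriv u r - c * deriv u r) r :=
      ((hψu r).sub_const _).sub (((hudiff r).sub_const (u t)).const_mul c)
    exact h.deriv
  have hthird : (∫ s in (0:ℝ)..t, (ψ (u (t - s)) - ψ (u t) - c * (u (t - s) - u t)) *
        (-(deriv k s))) = ∫ σ in (0:ℝ)..t, b (t - σ) * (-(deriv k σ)) := rfl
  have hsplit : ∫ σ in (0:ℝ)..t, k σ * deriv b (t - σ)
      = (∫ σ in (0:ℝ)..t, k σ * (deriv ψ (u (t - σ)) * deriv u (t - σ)))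
        - c * ∫ σ in (0:ℝ)..t, k σ * deriv u (t - σ) := by
    have e : ∀ σ ∈ uIcc (0:ℝ) t, k σ * deriv b (t - σ)
        = k σ * (deriv ψ (u (t - σ)) * deriv u (t - σ)) - c * (k σ * deriv u (t - σ)) := by
      intro σ _
      rw [hbderiv]
      ring
    have i1 : IntervalIntegrable
        (fun σ => k σ * (deriv ψ (u (t - σ)) * deriv u (t - σ))) volume 0 t :=
      (kInt hkloc ht).mul_continuousOn
        (((hψc.comp (hu1.continuous.comp (continuous_const.sub continuous_id))).mul
          (huc.comp (continuous_const.sub continuous_id)))).continuousOn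
    have i2 : IntervalIntegrable
        (fun σ => c * (k σ * deriv u (t - σ))) volume 0 t :=
      ((kInt hkloc ht).mul_continuousOn
        ((huc.comp (continuous_const.sub continuous_id))).continuousOn).const_mul c
    rw [intervalIntegral.integral_congr e, intervalIntegral.integral_sub i1 i2,
      intervalIntegral.integral_const_mul]
  rw [d1, d2, hthird, hbR, hsplit]
  simp only [hbdef]
  ring
end
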